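/- arXiv:2508.05822 — 7 statements merged into one kernel-verified Lean document; each statement's English description precedes it below -/
import Mathlib

section
/- Let G = (V, E) be a finite directed graph with no self-loops. The Graver basis 𝔊_{A_TV} of the matrix A_TV consists exactly of the vectors ±(χ_S, χ_{δ⁺(S)} − χ_{δ⁻(S)}) ∈ ℤ^V × ℤ^E, where S ranges over all subsets of V that induce a connected subgraph of G. That is, g ∈ ℤ^V × ℤ^E is a ⊑-minimal element of (ker_ℤ(A_TV)) \ {0} if and only if g = ε(χ_S, χ_{δ⁺(S)} − χ_{δ⁻(S)}) for some ε ∈ {+1, −1} and some S ⊆ V inducing a connected subgraph. -/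
open scoped Classical

/-- The undirected support graph of the directed edge set `E`. -/
def undirGraph {V : Type*} (E : Finset (V × V)) : SimpleGraph V where
  Adj u v := u ≠ v ∧ ((u, v) ∈ E ∨ (v, u) ∈ E)
  symm := by
    constructor
    intro u v h
    exact ⟨h.1.symm, h.2.elim Or.inr Or.inl⟩
  loopless := by constructor; intro u h; exact h.1 rfl

/-- `S ⊆ V` induces a connected subgraph of the (undirected version of the) graph. -/
def InducesConnected {V : Type*} (E : Finset (V × V)) (S : Set V) : Prop :=
  S.Nonempty ∧ ((undirGraph E).induce S).Connected

/-- Integer indicator vector of a set of vertices. -/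
noncomputable def chiV {V : Type*} (S : Set V) : V → ℤ :=
  S.indicator 1

/-- Integer indicator vector of a set of edges. -/
noncomputable def chiE {V : Type*} {E : Finset (V × V)}
    (T : Set {e : V × V // e ∈ E}) : {e : V × V // e ∈ E} → ℤ :=
  T.indicator 1

/-- Outgoing edges of `S`. -/
def deltaPlus {V : Type*} (E : Finset (V × V)) (S : Set V) :
    Set {e : V × V // e ∈ E} :=
  {e | (e : V × V).1 ∈ S ∧ (e : V × V).2 ∉ S}

/-- Incoming edges of `S`. -/
def deltaMinus {V : Type*} (E : Finset (V × V)) (S : Set V) :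
    Set {e : V × V // e ∈ E} :=
  {e | (e : V × V).1 ∉ S ∧ (e : V × V).2 ∈ S}

/-- The conformal (sign-compatible, coordinatewise) partial order `x ⊑ y`. -/
def Sqle {ι : Type*} (x y : ι → ℤ) : Prop :=
  ∀ i, 0 ≤ x i * y i ∧ |x i| ≤ |y i|

/-- `(x, a)` lies in the integer kernel of `A_TV`. -/
def InKerATV {V : Type*} (E : Finset (V × V)) (x : V → ℤ)
    (a : {e : V × V // e ∈ E} → ℤ) : Prop :=
  ∀ e : {e : V × V // e ∈ E}, x (e : V × V).1 - x (e : V × V).2 = a e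

/-- `(x, a)` is a Graver basis element of `A_TV`: a `⊑`-minimal nonzero
element of the integer kernel. -/
def InGraverATV {V : Type*} (E : Finset (V × V)) (x : V → ℤ)
    (a : {e : V × V // e ∈ E} → ℤ) : Prop :=
  InKerATV E x a ∧ ¬(x = 0 ∧ a = 0) ∧
    ∀ (x' : V → ℤ) (a' : {e : V × V // e ∈ E} → ℤ),
      InKerATV E x' a' → ¬(x' = 0 ∧ a' = 0) → Sqle x' x → Sqle a' a →
        x' = x ∧ a' = a

/-!
An element `(x, a)` of the kernel of `A_TV` is determined by its vertex part: `a = δx` with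
`(δx)(u, v) = x u - x v`. If `x` is conformally minimal and `x v₀ > 0`, let `S` be the set of
vertices reachable from `v₀` through vertices where `x` is positive. Every vertex of `S` has
`x ≥ 1` and every neighbour outside `S` has `x ≤ 0`, so `(χ_S, δχ_S) ⊑ (x, δx)` and minimality
forces `x = χ_S`. Conversely, if `y ⊑ χ_S` and `δy ⊑ δχ_S`, then `δy` vanishes on the edges inside
`S`, so `y` is constant on the connected set `S` and zero outside it, hence `y = 0` or `y = χ_S`.
-/

open Relation

section

variable {V : Type*}

namespace SimpleGraph

variable {G : SimpleGraph V}

lemma Reachable.eq_of_forall_adj {α : Type*} {f : V → α}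
    (hf : ∀ u v, G.Adj u v → f u = f v) {u v : V} (h : G.Reachable u v) : f u = f v := by
  rw [reachable_eq_reflTransGen] at h
  induction h with
  | refl => rfl
  | tail _ hadj ih => exact ih.trans (hf _ _ hadj)

def reachableWithin (G : SimpleGraph V) (p : V → Prop) (v₀ : V) : Set V :=
  {v | ReflTransGen (fun u w => G.Adj u w ∧ p w) v₀ v}

variable {p : V → Prop} {v₀ : V}

lemma start_mem_reachableWithin : v₀ ∈ G.reachableWithin p v₀ :=
  ReflTransGen.refl

lemma reachableWithin_subset (h : p v₀) : G.reachableWithin p v₀ ⊆ {v | p v} := by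
  intro v hv
  induction hv with
  | refl => exact h
  | tail _ hadj => exact hadj.2

lemma mem_reachableWithin_of_adj {u v : V} (hu : u ∈ G.reachableWithin p v₀)
    (huv : G.Adj u v) (hv : p v) : v ∈ G.reachableWithin p v₀ :=
  ReflTransGen.tail hu ⟨huv, hv⟩

lemma connected_induce_reachableWithin : (G.induce (G.reachableWithin p v₀)).Connected := by
  rw [connected_iff_exists_forall_reachable]
  refine ⟨⟨v₀, start_mem_reachableWithin⟩, fun ⟨v, hv⟩ => ?_⟩
  induction hv with
  | refl => rfl
  | tail hu huw ih => exact ih.trans (Adj.reachable (comap_adj.2 huw.1))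

end SimpleGraph

section Sqle

variable {ι : Type*} {x y : ι → ℤ}

lemma Sqle.neg (h : Sqle x y) : Sqle (-x) (-y) := fun i => by
  simpa only [Pi.neg_apply, neg_mul_neg, abs_neg] using h i

lemma Sqle.eq_zero_of_eq_zero (h : Sqle x y) {i : ι} (hi : y i = 0) : x i = 0 :=
  abs_nonpos_iff.1 <| (h i).2.trans_eq (by rw [hi, abs_zero])

lemma Sqle.eq_of_abs_eq_one (h : Sqle x y) {i : ι} (hi : |y i| = 1) (hx : x i ≠ 0) :
    x i = y i := by
  grind [h i]

lemma sqle_indicator_sub_indicator_iff {P N : Set ι} (hPN : Disjoint P N) :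
    Sqle (P.indicator 1 - N.indicator 1) y ↔ (∀ i ∈ P, 0 < y i) ∧ ∀ i ∈ N, y i < 0 := by
  have hsub : ∀ i, (P.indicator 1 - N.indicator 1 : ι → ℤ) i =
      if i ∈ P then 1 else if i ∈ N then -1 else 0 := fun i => by
    by_cases hiP : i ∈ P
    · simp [hiP, Set.disjoint_left.1 hPN hiP]
    · by_cases hiN : i ∈ N <;> simp [hiP, hiN]
  simp only [Sqle, hsub]
  refine ⟨fun h => ⟨fun i hi => ?_, fun i hi => ?_⟩, fun ⟨hP, hN⟩ i => ?_⟩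
  · grind
  · grind [Set.disjoint_right.1 hPN hi]
  · grind

lemma sqle_indicator_iff {P : Set ι} : Sqle (P.indicator 1) y ↔ ∀ i ∈ P, 0 < y i := by
  simpa [← Pi.zero_def] using sqle_indicator_sub_indicator_iff (y := y) (Set.disjoint_empty P)

end Sqle

def coboundary (E : Finset (V × V)) : (V → ℤ) →+ ({e : V × V // e ∈ E} → ℤ) where
  toFun x e := x (e : V × V).1 - x (e : V × V).2
  map_zero' := by ext; simp
  map_add' x y := by ext; simp only [Pi.add_apply]; ring

variable {E : Finset (V × V)} {S : Set V} {x : V → ℤ}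

@[simp]
lemma coboundary_apply (e : {e : V × V // e ∈ E}) :
    coboundary E x e = x (e : V × V).1 - x (e : V × V).2 :=
  rfl

lemma inKerATV_iff {a : {e : V × V // e ∈ E} → ℤ} : InKerATV E x a ↔ a = coboundary E x :=
  ⟨fun h => funext fun e => (h e).symm, fun h e => by rw [h, coboundary_apply]⟩

lemma coboundary_chiV : coboundary E (chiV S) = chiE (deltaPlus E S) - chiE (deltaMinus E S) := by
  ext e
  by_cases h1 : (e : V × V).1 ∈ S <;> by_cases h2 : (e : V × V).2 ∈ S <;>
    simp [chiE, chiV, deltaPlus, deltaMinus, h1, h2]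

def IsGraverPotential (E : Finset (V × V)) (x : V → ℤ) : Prop :=
  x ≠ 0 ∧ ∀ y, y ≠ 0 → Sqle y x → Sqle (coboundary E y) (coboundary E x) → y = x

lemma inGraverATV_iff {a : {e : V × V // e ∈ E} → ℤ} :
    InGraverATV E x a ↔ a = coboundary E x ∧ IsGraverPotential E x := by
  simp only [InGraverATV, inKerATV_iff, forall_eq]
  constructor
  · rintro ⟨rfl, hnz, hmin⟩
    exact ⟨rfl, fun hx => hnz ⟨hx, by simp [hx]⟩,
      fun y hy hyx hδ => (hmin y (fun h => hy h.1) hyx hδ).1⟩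
  · rintro ⟨rfl, hx, hmin⟩
    refine ⟨rfl, fun h => hx h.1, fun y hnz hyx hδ => ?_⟩
    obtain rfl := hmin y (fun hy => hnz ⟨hy, by simp [hy]⟩) hyx hδ
    exact ⟨rfl, rfl⟩

lemma IsGraverPotential.neg (hx : IsGraverPotential E x) : IsGraverPotential E (-x) := by
  refine ⟨neg_ne_zero.2 hx.1, fun y hy hyx hδ => ?_⟩
  have := hx.2 (-y) (neg_ne_zero.2 hy) (by simpa using hyx.neg) (by simpa using hδ.neg)
  exact neg_eq_iff_eq_neg.1 this

lemma isGraverPotential_chiV (hS : InducesConnected E S) : IsGraverPotential E (chiV S) := by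
  obtain ⟨⟨v₀, hv₀⟩, hconn⟩ := hS
  refine ⟨fun h => by simpa [chiV, hv₀] using congrFun h v₀, fun y hy hyS hδ => ?_⟩
  have hy_out : ∀ v ∉ S, y v = 0 := fun v hv => hyS.eq_zero_of_eq_zero (by simp [chiV, hv])
  have hedge : ∀ u v, u ∈ S → v ∈ S → (u, v) ∈ E → y u = y v := fun u v hu hv he =>
    sub_eq_zero.1 (hδ.eq_zero_of_eq_zero (i := ⟨(u, v), he⟩) (by simp [chiV, hu, hv]))
  have hconst : ∀ u v : S, y u = y v := fun u v =>
    (hconn.preconnected u v).eq_of_forall_adj (f := fun w : S => y w)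
      fun ⟨u, hu⟩ ⟨v, hv⟩ ⟨_, he⟩ => he.elim (hedge u v hu hv) fun he => (hedge v u hv hu he).symm
  obtain ⟨w, hw⟩ := Function.ne_iff.1 hy
  have hwS : w ∈ S := by_contra fun h => hw (hy_out w h)
  have hw1 : y w = 1 := by simpa [chiV, hwS] using hyS.eq_of_abs_eq_one (by simp [chiV, hwS]) hw
  funext v
  by_cases hv : v ∈ S
  · simp [chiV, hv, hconst ⟨v, hv⟩ ⟨w, hwS⟩, hw1]
  · simp [chiV, hv, hy_out v hv]

lemma IsGraverPotential.eq_chiV_reachableWithin (hx : IsGraverPotential E x) {v₀ : V}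
    (hv₀ : 0 < x v₀) : x = chiV ((undirGraph E).reachableWithin (0 < x ·) v₀) := by
  set S := (undirGraph E).reachableWithin (0 < x ·) v₀
  have hpos : ∀ v ∈ S, 0 < x v := SimpleGraph.reachableWithin_subset hv₀
  have hcut : ∀ u v, u ∈ S → v ∉ S → (u, v) ∈ E ∨ (v, u) ∈ E → x v < x u := by
    intro u v hu hv he
    have : ¬ 0 < x v := fun h =>
      hv (SimpleGraph.mem_reachableWithin_of_adj hu ⟨ne_of_mem_of_not_mem hu hv, he⟩ h)
    linarith [hpos u hu]
  have hv₀S : v₀ ∈ S := SimpleGraph.start_mem_reachableWithin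
  refine (hx.2 (chiV S) ?_ ?_ ?_).symm
  · exact fun h => by simpa [chiV, hv₀S] using congrFun h v₀
  · exact sqle_indicator_iff.2 hpos
  · rw [coboundary_chiV, chiE, chiE, sqle_indicator_sub_indicator_iff
      (Set.disjoint_left.2 fun _ hout hin => hout.2 hin.2)]
    exact ⟨fun e he => sub_pos.2 (hcut _ _ he.1 he.2 (.inl e.2)),
      fun e he => sub_neg.2 (hcut _ _ he.2 he.1 (.inr e.2))⟩

lemma isGraverPotential_iff : IsGraverPotential E x ↔
    ∃ (ε : ℤ) (S : Set V), (ε = 1 ∨ ε = -1) ∧ InducesConnected E S ∧ x = ε • chiV S := by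
  constructor
  · intro hx
    obtain ⟨v₀, hv₀⟩ : ∃ v, x v ≠ 0 := Function.ne_iff.1 hx.1
    have hS : ∀ p : V → Prop, InducesConnected E ((undirGraph E).reachableWithin p v₀) :=
      fun _ => ⟨⟨v₀, SimpleGraph.start_mem_reachableWithin⟩,
        SimpleGraph.connected_induce_reachableWithin⟩
    rcases hv₀.lt_or_gt with hneg | hpos
    · refine ⟨-1, (undirGraph E).reachableWithin (0 < (-x) ·) v₀, .inr rfl, hS _, ?_⟩
      rw [neg_one_smul, ← hx.neg.eq_chiV_reachableWithin (neg_pos.2 hneg), neg_neg]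
    · exact ⟨1, _, .inl rfl, hS _, by rw [one_smul, ← hx.eq_chiV_reachableWithin hpos]⟩
  · rintro ⟨ε, S, rfl | rfl, hS, rfl⟩
    · simpa using isGraverPotential_chiV hS
    · simpa using (isGraverPotential_chiV hS).neg

end

theorem graverBasis_ATV_characterization_general
    {V : Type*} (E : Finset (V × V))
    (x : V → ℤ) (a : {e : V × V // e ∈ E} → ℤ) :
    InGraverATV E x a ↔
      ∃ (ε : ℤ) (S : Set V), (ε = 1 ∨ ε = -1) ∧ InducesConnected E S ∧
        x = ε • chiV S ∧
        a = ε • (chiE (deltaPlus E S) - chiE (deltaMinus E S)) := by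
  rw [inGraverATV_iff, isGraverPotential_iff]
  constructor
  · rintro ⟨rfl, ε, S, hε, hS, rfl⟩
    exact ⟨ε, S, hε, hS, rfl, by rw [map_zsmul, coboundary_chiV]⟩
  · rintro ⟨ε, S, hε, hS, rfl, rfl⟩
    exact ⟨by rw [map_zsmul, coboundary_chiV], ε, S, hε, hS, rfl⟩

/-- The Graver basis of `A_TV` consists exactly of the vectors
`±(χ_S, χ_{δ⁺(S)} − χ_{δ⁻(S)})` where `S` ranges over subsets of `V` inducing a
connected subgraph. -/
theorem graverBasis_ATV_characterization
    {V : Type*} [Fintype V] [DecidableEq V] (E : Finset (V × V))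
    (hloop : ∀ e ∈ E, e.1 ≠ e.2)
    (x : V → ℤ) (a : {e : V × V // e ∈ E} → ℤ) :
    InGraverATV E x a ↔
      ∃ (ε : ℤ) (S : Set V), (ε = 1 ∨ ε = -1) ∧ InducesConnected E S ∧
        x = ε • chiV S ∧
        a = ε • (chiE (deltaPlus E S) - chiE (deltaMinus E S)) :=
  graverBasis_ATV_characterization_general E x a
end

section
/- Let G = (V, E) be a finite directed graph with no self-loops, let Q ∈ ℕ, and let F_v : ℝ → ℝ (v ∈ V) and G_{uv} : ℝ → ℝ ((u,v) ∈ E) be convex functions, with J(x) = Σ_{v∈V} F_v(x_v) + Σ_{(u,v)∈E} G_{uv}(x_u − x_v) for x ∈ ℤ^V. Suppose x ∈ ℤ^V satisfies 0 ≤ x_v ≤ Q for all v, and that for every subset X ⊆ V and every sign ε ∈ {+1, −1}, if 0 ≤ x_v + ε·(χ_X)_v ≤ Q for all v then J(x) ≤ J(x + ε χ_X). Then x is globally optimal: J(x) ≤ J(y) for every y ∈ ℤ^V with 0 ≤ y_v ≤ Q for all v. -/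
open scoped Classical

/-- The objective `J(x) = Σ_v F_v(x_v) + Σ_{(u,v)∈E} G_{uv}(x_u − x_v)`. -/
noncomputable def JObj {V : Type*} [Fintype V] (E : Finset (V × V))
    (F : V → ℝ → ℝ) (Gf : V × V → ℝ → ℝ) (x : V → ℤ) : ℝ :=
  (∑ v, F v (x v : ℝ)) + ∑ e ∈ E, Gf e ((x e.1 : ℝ) - (x e.2 : ℝ))

/-!
The objective `J` is discrete midpoint convex: `J ⌊(y+z)/2⌋ + J ⌈(y+z)/2⌉ ≤ J y + J z`, since each
term `F_v` or `G_{uv}` is a convex function evaluated at two integers with the same sum as, and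
lying between, its two original arguments. Given `y` in the box, the two midpoints of `x` and `y`
stay in the box and, when `‖y - x‖_∞ ≥ 2`, are strictly closer to `x` in the sup-norm, so by
induction `J x` is at most their values, and midpoint convexity gives `J x ≤ J y`. When
`‖y - x‖_∞ ≤ 1` the two midpoints are `x - χ_{y < x}` and `x + χ_{x < y}`, which is where local
optimality enters.
-/

theorem ConvexOn.map_add_map_le_of_mem_uIcc {s : Set ℝ} {f : ℝ → ℝ} (hf : ConvexOn ℝ s f)
    {a b x y : ℝ} (ha : a ∈ s) (hb : b ∈ s) (hx : x ∈ Set.uIcc a b) (hxy : x + y = a + b) :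
    f x + f y ≤ f a + f b := by
  wlog hab : a ≤ b generalizing a b
  · rw [add_comm (f a)]
    exact this hb ha (Set.uIcc_comm a b ▸ hx) (by linarith) (by linarith)
  rw [Set.uIcc_of_le hab] at hx
  rcases hab.eq_or_lt with rfl | hab
  · obtain rfl : x = a := le_antisymm hx.2 hx.1
    obtain rfl : y = x := by linarith
    rfl
  have hba : b - a ≠ 0 := by linarith
  set l := (b - x) / (b - a)
  set m := (x - a) / (b - a)
  have hl : 0 ≤ l := div_nonneg (by linarith [hx.2]) (by linarith)
  have hm : 0 ≤ m := div_nonneg (by linarith [hx.1]) (by linarith)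
  have hlm : l + m = 1 := by simp only [l, m]; field_simp; ring
  have hx' : l • a + m • b = x := by simp only [smul_eq_mul, l, m]; field_simp; ring
  have hy' : m • a + l • b = y := by
    rw [show y = a + b - x by linarith]; simp only [smul_eq_mul, l, m]; field_simp; ring
  have h₁ := hf.2 ha hb hl hm hlm
  have h₂ := hf.2 ha hb hm hl (by rw [add_comm, hlm])
  rw [hx'] at h₁
  rw [hy'] at h₂
  simp only [smul_eq_mul] at h₁ h₂
  calc f x + f y ≤ (l + m) * f a + (l + m) * f b := by linarith
    _ = f a + f b := by rw [hlm, one_mul, one_mul]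

section DiscreteMidpoint

variable {ι : Type*}

/- `/` on `ℤ` rounds down for a positive divisor, so `midFloor y z = ⌊(y + z) / 2⌋` and
`midCeil y z = ⌈(y + z) / 2⌉`. -/
def midFloor (y z : ι → ℤ) : ι → ℤ := fun v => (y v + z v) / 2

def midCeil (y z : ι → ℤ) : ι → ℤ := fun v => (y v + z v + 1) / 2

def DiscreteMidpointConvex (J : (ι → ℤ) → ℝ) : Prop :=
  ∀ y z, J (midFloor y z) + J (midCeil y z) ≤ J y + J z

def MidpointClosed (S : Set (ι → ℤ)) : Prop :=
  ∀ y ∈ S, ∀ z ∈ S, midFloor y z ∈ S ∧ midCeil y z ∈ S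

theorem midpointClosed_box (l u : ℤ) : MidpointClosed {y : ι → ℤ | ∀ v, l ≤ y v ∧ y v ≤ u} := by
  intro y hy z hz
  refine ⟨fun v => ?_, fun v => ?_⟩ <;>
  · have := hy v; have := hz v
    simp only [midFloor, midCeil]
    omega

theorem chiV_apply (X : Set ι) (v : ι) : chiV X v = if v ∈ X then 1 else 0 := by
  simp [chiV, Set.indicator_apply]

variable {x y : ι → ℤ}

theorem midFloor_eq_sub_chiV (h : ∀ v, (y v - x v).natAbs ≤ 1) :
    midFloor x y = x - chiV {v | y v < x v} := by
  funext v
  have := h v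
  simp only [midFloor, Pi.sub_apply, chiV_apply, Set.mem_ofPred_eq]
  split_ifs <;> omega

theorem midCeil_eq_add_chiV (h : ∀ v, (y v - x v).natAbs ≤ 1) :
    midCeil x y = x + chiV {v | x v < y v} := by
  funext v
  have := h v
  simp only [midCeil, Pi.add_apply, chiV_apply, Set.mem_ofPred_eq]
  split_ifs <;> omega

theorem natAbs_midFloor_sub_le {n : ℕ} (h : ∀ v, (y v - x v).natAbs ≤ n) (v : ι) :
    (midFloor x y v - x v).natAbs ≤ (n + 1) / 2 := by
  have := h v
  simp only [midFloor]
  omega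

theorem natAbs_midCeil_sub_le {n : ℕ} (h : ∀ v, (y v - x v).natAbs ≤ n) (v : ι) :
    (midCeil x y v - x v).natAbs ≤ (n + 1) / 2 := by
  have := h v
  simp only [midCeil]
  omega

namespace DiscreteMidpointConvex

variable {J : (ι → ℤ) → ℝ} {S : Set (ι → ℤ)}

theorem le_of_natAbs_sub_le_one (hJ : DiscreteMidpointConvex J) (hS : MidpointClosed S)
    (hx : x ∈ S) (hup : ∀ X, x + chiV X ∈ S → J x ≤ J (x + chiV X))
    (hdown : ∀ X, x - chiV X ∈ S → J x ≤ J (x - chiV X))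
    (hy : y ∈ S) (hxy : ∀ v, (y v - x v).natAbs ≤ 1) : J x ≤ J y := by
  have hmid := hJ x y
  obtain ⟨hfloor, hceil⟩ := hS x hx y hy
  rw [midFloor_eq_sub_chiV hxy] at hmid hfloor
  rw [midCeil_eq_add_chiV hxy] at hmid hceil
  linarith [hdown _ hfloor, hup _ hceil]

theorem le_of_forall_le_shift [Finite ι] (hJ : DiscreteMidpointConvex J) (hS : MidpointClosed S)
    (hx : x ∈ S) (hup : ∀ X, x + chiV X ∈ S → J x ≤ J (x + chiV X))
    (hdown : ∀ X, x - chiV X ∈ S → J x ≤ J (x - chiV X)) (hy : y ∈ S) : J x ≤ J y := by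
  have key : ∀ n ≥ 1, ∀ y ∈ S, (∀ v, (y v - x v).natAbs ≤ n) → J x ≤ J y := by
    intro n hn
    induction n, hn using Nat.le_induction with
    | base => exact fun y hy => hJ.le_of_natAbs_sub_le_one hS hx hup hdown hy
    | succ n hn ih =>
      intro y hy hxy
      have hclose : (n + 1 + 1) / 2 ≤ n := by omega
      obtain ⟨hfloor, hceil⟩ := hS x hx y hy
      have h₁ := ih _ hfloor fun v => (natAbs_midFloor_sub_le hxy v).trans hclose
      have h₂ := ih _ hceil fun v => (natAbs_midCeil_sub_le hxy v).trans hclose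
      linarith [hJ x y]
  obtain ⟨D, hD⟩ := Finite.exists_le fun v => (y v - x v).natAbs
  exact key (max D 1) (le_max_right _ _) y hy fun v => (hD v).trans (le_max_left _ _)

end DiscreteMidpointConvex

end DiscreteMidpoint

theorem ConvexOn.map_add_map_le_of_mem_uIcc_int {f : ℝ → ℝ} (hf : ConvexOn ℝ Set.univ f)
    {a b x y : ℤ} (hx : x ∈ Set.uIcc a b) (hxy : x + y = a + b) :
    f x + f y ≤ f a + f b := by
  refine hf.map_add_map_le_of_mem_uIcc trivial trivial (Set.mem_uIcc.2 ?_) (by exact_mod_cast hxy)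
  exact_mod_cast Set.mem_uIcc.1 hx

theorem discreteMidpointConvex_JObj {V : Type*} [Fintype V] {E : Finset (V × V)}
    {F : V → ℝ → ℝ} {Gf : V × V → ℝ → ℝ} (hF : ∀ v, ConvexOn ℝ Set.univ (F v))
    (hG : ∀ e ∈ E, ConvexOn ℝ Set.univ (Gf e)) : DiscreteMidpointConvex (JObj E F Gf) := by
  intro y z
  have hvert : ∀ v ∈ Finset.univ, F v (midFloor y z v : ℤ) + F v (midCeil y z v : ℤ)
      ≤ F v (y v : ℤ) + F v (z v : ℤ) := fun v _ =>
    (hF v).map_add_map_le_of_mem_uIcc_int (Set.mem_uIcc.2 (by simp only [midFloor]; omega))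
      (by simp only [midFloor, midCeil]; omega)
  have hedge : ∀ e ∈ E,
      Gf e ((midFloor y z e.1 - midFloor y z e.2 : ℤ) : ℝ)
        + Gf e ((midCeil y z e.1 - midCeil y z e.2 : ℤ) : ℝ)
        ≤ Gf e ((y e.1 - y e.2 : ℤ) : ℝ) + Gf e ((z e.1 - z e.2 : ℤ) : ℝ) := fun e he =>
    (hG e he).map_add_map_le_of_mem_uIcc_int (Set.mem_uIcc.2 (by simp only [midFloor]; omega))
      (by simp only [midFloor, midCeil]; omega)
  have hvert_sum := Finset.sum_le_sum hvert
  have hedge_sum := Finset.sum_le_sum hedge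
  simp only [Finset.sum_add_distrib, Int.cast_sub] at hvert_sum hedge_sum
  simp only [JObj]
  linarith

theorem subset_moves_optimality_certificate_general
    {V : Type*} [Fintype V] (E : Finset (V × V))
    (Q : ℕ)
    (F : V → ℝ → ℝ) (Gf : V × V → ℝ → ℝ)
    (hF : ∀ v, ConvexOn ℝ Set.univ (F v))
    (hG : ∀ e ∈ E, ConvexOn ℝ Set.univ (Gf e))
    (x : V → ℤ) (hx : ∀ v, 0 ≤ x v ∧ x v ≤ (Q : ℤ))
    (hopt : ∀ (X : Set V) (ε : ℤ), (ε = 1 ∨ ε = -1) →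
      (∀ v, 0 ≤ x v + ε * chiV X v ∧ x v + ε * chiV X v ≤ (Q : ℤ)) →
      JObj E F Gf x ≤ JObj E F Gf (x + ε • chiV X)) :
    ∀ y : V → ℤ, (∀ v, 0 ≤ y v ∧ y v ≤ (Q : ℤ)) →
      JObj E F Gf x ≤ JObj E F Gf y := by
  intro y hy
  refine (discreteMidpointConvex_JObj hF hG).le_of_forall_le_shift (midpointClosed_box 0 Q)
    hx (fun X hX => ?_) (fun X hX => ?_) hy
  · simpa using hopt X 1 (Or.inl rfl) (by simpa using hX)
  · simpa [sub_eq_add_neg] using hopt X (-1) (Or.inr rfl) (by simpa [sub_eq_add_neg] using hX)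

/-- If no up- or down-shift on any vertex subset improves the
objective, then `x` is globally optimal over the box (Kolmogorov–Shioura
optimality certificate). -/
theorem subset_moves_optimality_certificate
    {V : Type*} [Fintype V] [DecidableEq V] (E : Finset (V × V))
    (hloop : ∀ e ∈ E, e.1 ≠ e.2) (Q : ℕ)
    (F : V → ℝ → ℝ) (Gf : V × V → ℝ → ℝ)
    (hF : ∀ v, ConvexOn ℝ Set.univ (F v))
    (hG : ∀ e ∈ E, ConvexOn ℝ Set.univ (Gf e))
    (x : V → ℤ) (hx : ∀ v, 0 ≤ x v ∧ x v ≤ (Q : ℤ))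
    (hopt : ∀ (X : Set V) (ε : ℤ), (ε = 1 ∨ ε = -1) →
      (∀ v, 0 ≤ x v + ε * chiV X v ∧ x v + ε * chiV X v ≤ (Q : ℤ)) →
      JObj E F Gf x ≤ JObj E F Gf (x + ε • chiV X)) :
    ∀ y : V → ℤ, (∀ v, 0 ≤ y v ∧ y v ≤ (Q : ℤ)) →
      JObj E F Gf x ≤ JObj E F Gf y :=
  subset_moves_optimality_certificate_general E Q F Gf hF hG x hx hopt
end

section
/- Let G = (V, E) be a finite directed graph with no self-loops, let Q ∈ ℕ, let Δ ∈ ℝ, and let F_v, G_{uv}, H_v : ℝ → ℝ be convex functions (v ∈ V, (u,v) ∈ E), with J(x) = Σ_{v∈V} F_v(x_v) + Σ_{(u,v)∈E} G_{uv}(x_u − x_v) and H(x) = Σ_{v∈V} H_v(x_v) for x ∈ ℤ^V. Suppose x⁰ ∈ ℤ^V is such that for every v, x⁰_v ∈ {0,…,Q} minimizes H_v over {0,…,Q}, and suppose x* is a global minimizer of J over the feasible set {x ∈ ℤ^V : 0 ≤ x_v ≤ Q for all v, H(x) ≤ Δ} (assumed nonempty). Then there exist N ∈ ℕ, subsets S_1,…,S_N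 ⊆ V each inducing a connected subgraph, signs ε_1,…,ε_N ∈ {+1, −1}, and positive integers α_1,…,α_N such that the iterates x^k = x⁰ + Σ_{j=1}^{k} α_j ε_j χ_{S_j} satisfy: J(x^k) ≤ J(x^{k−1}) for k = 1,…,N; each x^k is feasible (0 ≤ x^k_v ≤ Q for all v and H(x^k) ≤ Δ) for k = 0,…,N; and x^N = x*. -/
open scoped Classical

/-- The budget `H(x) = Σ_v H_v(x_v)`. -/
noncomputable def HObj {V : Type*} [Fintype V] (Hf : V → ℝ → ℝ) (x : V → ℤ) : ℝ :=
  ∑ v, Hf v (x v : ℝ)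

/-!
Write `d = x* - x⁰`. Peeling off, one at a time, the connected component of `{v | ε d_v > 0}`
containing a vertex where `d` has sign `ε` writes `d` as a sum of moves `ε χ_S` with `S`
connected, each conformal to `d` both on vertices and on edge differences. Since `J` is a sum of
convex functions of the vertex values and of the edge differences, its increments are
superadditive along such a conformal sum, so `0 ≥ J(x*) - J(x) ≥ Σ (J(x + ε χ_S) - J(x))` and
one of these moves does not increase `J`. Every iterate lies coordinatewise between `x⁰` and
`x*`, where the convex `H_v`, minimal at `x⁰_v`, is at most `H_v(x*_v)`; so all iterates are
feasible. All step lengths `α` are `1`.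
-/

open Set

theorem mul_nonneg_and_abs_le_iff_mem_uIcc {a c : ℤ} : 0 ≤ a * c ∧ |a| ≤ |c| ↔ a ∈ uIcc 0 c := by
  rw [mem_uIcc]
  constructor
  · rintro ⟨hac, habs⟩
    rcases le_total 0 c with hc | hc
    · rw [abs_of_nonneg hc] at habs
      exact Or.inl ⟨by by_contra! ha; nlinarith [abs_of_neg ha], (le_abs_self a).trans habs⟩
    · rw [abs_of_nonpos hc] at habs
      exact Or.inr ⟨by linarith [neg_abs_le a], by by_contra! ha; nlinarith [abs_of_pos ha]⟩
  · rintro (⟨h0, h1⟩ | ⟨h0, h1⟩)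
    · exact ⟨mul_nonneg h0 (h0.trans h1), abs_le_abs_of_nonneg h0 h1⟩
    · exact ⟨mul_nonneg_of_nonpos_of_nonpos h1 (h0.trans h1), abs_le_abs_of_nonpos h1 h0⟩

section ConformalOrder

variable {ι : Type*} {a b c : ι → ℤ}

theorem sqle_iff_forall_mem_uIcc : Sqle a c ↔ ∀ i, a i ∈ uIcc 0 (c i) :=
  forall_congr' fun _ => mul_nonneg_and_abs_le_iff_mem_uIcc

namespace Sqle

theorem trans (hab : Sqle a b) (hbc : Sqle b c) : Sqle a c := by
  rw [sqle_iff_forall_mem_uIcc] at *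
  exact fun i => uIcc_subset_uIcc left_mem_uIcc (hbc i) (hab i)

theorem sub_sqle_self (h : Sqle a c) : Sqle (c - a) c := by
  rw [sqle_iff_forall_mem_uIcc] at *
  intro i
  have := h i
  rw [mem_uIcc] at *
  simp only [Pi.sub_apply]
  omega

theorem mul_nonneg (ha : Sqle a c) (hb : Sqle b c) (i : ι) : 0 ≤ a i * b i := by
  have ha := sqle_iff_forall_mem_uIcc.1 ha i
  have hb := sqle_iff_forall_mem_uIcc.1 hb i
  rw [mem_uIcc] at ha hb
  rcases ha with ⟨ha₀, ha₁⟩ | ⟨ha₀, ha₁⟩ <;> rcases hb with ⟨hb₀, hb₁⟩ | ⟨hb₀, hb₁⟩ <;> nlinarith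

theorem add_mem_uIcc {x y : ι → ℤ} (h : Sqle a (y - x)) (i : ι) :
    (x + a) i ∈ uIcc (x i) (y i) := by
  have := sqle_iff_forall_mem_uIcc.1 h i
  rw [mem_uIcc] at *
  simp only [Pi.add_apply, Pi.sub_apply] at *
  omega

theorem sum_natAbs_sub_lt [Fintype ι] (h : Sqle a c) (ha : a ≠ 0) :
    ∑ i, ((c - a) i).natAbs < ∑ i, (c i).natAbs := by
  obtain ⟨j, hj⟩ := Function.ne_iff.1 ha
  have h := sqle_iff_forall_mem_uIcc.1 h
  refine Finset.sum_lt_sum (fun i _ => ?_) ⟨j, Finset.mem_univ j, ?_⟩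
  · have := h i
    rw [mem_uIcc] at this
    simp only [Pi.sub_apply]
    omega
  · have := h j
    rw [mem_uIcc] at this
    simp only [Pi.sub_apply, Pi.zero_apply] at hj ⊢
    omega

end Sqle

end ConformalOrder

theorem ConvexOn.map_add_add_map_add_le {f : ℝ → ℝ} (hf : ConvexOn ℝ univ f) {t a b : ℝ}
    (hab : 0 ≤ a * b) : f (t + a) + f (t + b) ≤ f t + f (t + (a + b)) := by
  rcases eq_or_ne (a + b) 0 with hs | hs
  · obtain rfl : a = 0 := by nlinarith
    obtain rfl : b = 0 := by linarith
    simp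
  have on_segment : ∀ l : ℝ, 0 ≤ l → 0 ≤ 1 - l →
      f (t + l * (a + b)) ≤ (1 - l) * f t + l * f (t + (a + b)) := fun l hl hl' => by
    have := hf.2 (mem_univ t) (mem_univ (t + (a + b))) hl' hl (by ring)
    simp only [smul_eq_mul] at this
    rwa [show (1 - l) * t + l * (t + (a + b)) = t + l * (a + b) by ring] at this
  -- `t + a` and `t + b` split the segment `[t, t + (a + b)]` in the ratios `l` and `1 - l`
  set l := a / (a + b)
  have hla : l * (a + b) = a := div_mul_cancel₀ a hs
  have hlb : (1 - l) * (a + b) = b := by rw [sub_mul, hla]; ring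
  have hs2 : 0 < (a + b) * (a + b) := mul_self_pos.2 hs
  have hl : 0 ≤ l := by rw [← mul_nonneg_iff_of_pos_right hs2, ← mul_assoc, hla]; nlinarith
  have hl' : 0 ≤ 1 - l := by rw [← mul_nonneg_iff_of_pos_right hs2, ← mul_assoc, hlb]; nlinarith
  have h1 := on_segment l hl hl'
  have h2 := on_segment (1 - l) hl' (by linarith)
  rw [hla] at h1
  rw [hlb] at h2
  linarith

theorem ConvexOn.sum_map_add_sub_le {ι : Type*} {f : ℝ → ℝ} (hf : ConvexOn ℝ univ f) (t : ℝ)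
    {s : Finset ι} {a : ι → ℝ} (ha : ∀ i ∈ s, ∀ j ∈ s, 0 ≤ a i * a j) :
    ∑ i ∈ s, (f (t + a i) - f t) ≤ f (t + ∑ i ∈ s, a i) - f t := by
  classical
  induction s using Finset.induction_on with
  | empty => simp
  | insert j s hj ih =>
    have ha' : ∀ i ∈ s, ∀ k ∈ s, 0 ≤ a i * a k := fun i hi k hk =>
      ha i (Finset.mem_insert_of_mem hi) k (Finset.mem_insert_of_mem hk)
    have hj_sum : 0 ≤ a j * ∑ i ∈ s, a i := by
      rw [Finset.mul_sum]
      exact Finset.sum_nonneg fun i hi =>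
        ha j (Finset.mem_insert_self j s) i (Finset.mem_insert_of_mem hi)
    rw [Finset.sum_insert hj, Finset.sum_insert hj]
    linarith [ih ha', hf.map_add_add_map_add_le (t := t) hj_sum]

theorem SimpleGraph.induce_setOf_reflTransGen_connected {V : Type*} (G : SimpleGraph V)
    {r : V → V → Prop} (hr : ∀ a b, r a b → G.Adj a b) (w : V) :
    (G.induce {v | Relation.ReflTransGen r w v}).Connected := by
  have reachable : ∀ v (hv : Relation.ReflTransGen r w v),
      (G.induce {v | Relation.ReflTransGen r w v}).Reachable ⟨w, .refl⟩ ⟨v, hv⟩ := by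
    intro v hv
    induction hv with
    | refl => rfl
    | tail _ huv ih => exact ih.trans (SimpleGraph.Adj.reachable (hr _ _ huv))
  rw [SimpleGraph.connected_iff]
  exact ⟨fun u v => (reachable u u.2).symm.trans (reachable v v.2), ⟨⟨w, .refl⟩⟩⟩

section Augmentation

variable {V : Type*} {E : Finset (V × V)}

def edgeDiff (E : Finset (V × V)) (x : V → ℤ) : {e : V × V // e ∈ E} → ℤ :=
  fun e => x (e : V × V).1 - x (e : V × V).2

/-- `(g, D g) ⊑ (d, D d)` with `D = edgeDiff E`: the conformal order on the kernel of `A_TV`. -/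
def ConformalTV (E : Finset (V × V)) (g d : V → ℤ) : Prop :=
  Sqle g d ∧ Sqle (edgeDiff E g) (edgeDiff E d)

theorem ConformalTV.trans {a b c : V → ℤ} (hab : ConformalTV E a b) (hbc : ConformalTV E b c) :
    ConformalTV E a c :=
  ⟨hab.1.trans hbc.1, hab.2.trans hbc.2⟩

theorem ConformalTV.sub_conformalTV_self {a c : V → ℤ} (h : ConformalTV E a c) : ConformalTV E (c - a) c := by
  refine ⟨h.1.sub_sqle_self, ?_⟩
  have : edgeDiff E (c - a) = edgeDiff E c - edgeDiff E a := by
    funext e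
    simp only [edgeDiff, Pi.sub_apply]
    ring
  rw [this]
  exact h.2.sub_sqle_self

theorem JObj_sum_add_sub_le [Fintype V] {ι : Type*} {F : V → ℝ → ℝ} {Gf : V × V → ℝ → ℝ}
    (hF : ∀ v, ConvexOn ℝ univ (F v)) (hG : ∀ e ∈ E, ConvexOn ℝ univ (Gf e))
    (x d : V → ℤ) {s : Finset ι} {g : ι → V → ℤ} (hg : ∀ i ∈ s, ConformalTV E (g i) d) :
    ∑ i ∈ s, (JObj E F Gf (x + g i) - JObj E F Gf x)
      ≤ JObj E F Gf (x + ∑ i ∈ s, g i) - JObj E F Gf x := by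
  have vertex_le : ∀ v, ∑ i ∈ s, (F v ((x + g i) v : ℝ) - F v (x v : ℝ))
      ≤ F v ((x + ∑ i ∈ s, g i) v : ℝ) - F v (x v : ℝ) := fun v => by
    have := (hF v).sum_map_add_sub_le (x v) (a := fun i => (g i v : ℝ))
      fun i hi j hj => by exact_mod_cast (hg i hi).1.mul_nonneg (hg j hj).1 v
    simpa only [Pi.add_apply, Finset.sum_apply, Int.cast_add, Int.cast_sum] using this
  have edge_le : ∀ e ∈ E, ∑ i ∈ s, (Gf e (((x + g i) e.1 : ℝ) - ((x + g i) e.2 : ℝ))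
        - Gf e ((x e.1 : ℝ) - (x e.2 : ℝ)))
      ≤ Gf e (((x + ∑ i ∈ s, g i) e.1 : ℝ) - ((x + ∑ i ∈ s, g i) e.2 : ℝ))
        - Gf e ((x e.1 : ℝ) - (x e.2 : ℝ)) := fun e he => by
    have := (hG e he).sum_map_add_sub_le ((x e.1 : ℝ) - (x e.2 : ℝ))
      (a := fun i => (g i e.1 : ℝ) - (g i e.2 : ℝ))
      fun i hi j hj => by exact_mod_cast (hg i hi).2.mul_nonneg (hg j hj).2 ⟨e, he⟩
    convert this using 4 <;>
      simp only [Pi.add_apply, Finset.sum_apply, Int.cast_add, Int.cast_sum,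
        Finset.sum_sub_distrib] <;>
      ring
  calc ∑ i ∈ s, (JObj E F Gf (x + g i) - JObj E F Gf x)
      = ∑ v, ∑ i ∈ s, (F v ((x + g i) v : ℝ) - F v (x v : ℝ))
        + ∑ e ∈ E, ∑ i ∈ s, (Gf e (((x + g i) e.1 : ℝ) - ((x + g i) e.2 : ℝ))
          - Gf e ((x e.1 : ℝ) - (x e.2 : ℝ))) := by
        rw [Finset.sum_comm, Finset.sum_comm (s := E), ← Finset.sum_add_distrib]
        refine Finset.sum_congr rfl fun i _ => ?_
        simp only [JObj, Finset.sum_sub_distrib]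
        ring
    _ ≤ _ := add_le_add (Finset.sum_le_sum fun v _ => vertex_le v) (Finset.sum_le_sum edge_le)
    _ = JObj E F Gf (x + ∑ i ∈ s, g i) - JObj E F Gf x := by
        simp only [JObj, Finset.sum_sub_distrib]
        ring

theorem smul_chiV_apply (ε : ℤ) (S : Set V) (v : V) :
    (ε • chiV S) v = if v ∈ S then ε else 0 := by
  by_cases hv : v ∈ S <;> simp [chiV, hv]

theorem smul_chiV_ne_zero {ε : ℤ} (hε : ε ≠ 0) {S : Set V} (hS : S.Nonempty) : ε • chiV S ≠ 0 := by
  obtain ⟨w, hw⟩ := hS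
  exact Function.ne_iff.2 ⟨w, by rw [smul_chiV_apply, if_pos hw]; exact hε⟩

theorem unit_mem_uIcc_zero {ε c : ℤ} (hε : ε = 1 ∨ ε = -1) (h : 0 < ε * c) : ε ∈ uIcc 0 c := by
  rw [mem_uIcc]
  rcases hε with rfl | rfl <;> omega

def signComponent (E : Finset (V × V)) (d : V → ℤ) (ε : ℤ) (w : V) : Set V :=
  {v | Relation.ReflTransGen (fun a b => (undirGraph E).Adj a b ∧ 0 < ε * d b) w v}

section SignComponent

variable {d : V → ℤ} {ε : ℤ} {w : V}

theorem inducesConnected_signComponent : InducesConnected E (signComponent E d ε w) :=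
  ⟨⟨w, .refl⟩, SimpleGraph.induce_setOf_reflTransGen_connected _ (fun _ _ h => h.1) w⟩

theorem pos_of_mem_signComponent (hw : 0 < ε * d w) {v : V} (hv : v ∈ signComponent E d ε w) :
    0 < ε * d v := by
  induction hv with
  | refl => exact hw
  | tail _ huv => exact huv.2

theorem mem_signComponent_of_adj {u v : V} (hu : u ∈ signComponent E d ε w)
    (huv : (undirGraph E).Adj u v) (hv : 0 < ε * d v) : v ∈ signComponent E d ε w :=
  .tail hu ⟨huv, hv⟩

/-- An edge leaving `S` ends at a vertex where `ε * d ≤ 0`, so `d` changes in the direction `ε`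
across it. -/
theorem conformalTV_signComponent (hloop : ∀ e ∈ E, e.1 ≠ e.2) (hε : ε = 1 ∨ ε = -1)
    (hw : 0 < ε * d w) : ConformalTV E (ε • chiV (signComponent E d ε w)) d := by
  set S := signComponent E d ε w
  have hε' : -ε = 1 ∨ -ε = -1 := by omega
  refine ⟨sqle_iff_forall_mem_uIcc.2 fun v => ?_, sqle_iff_forall_mem_uIcc.2 fun e => ?_⟩
  · rw [smul_chiV_apply]
    split_ifs with hv
    exacts [unit_mem_uIcc_zero hε (pos_of_mem_signComponent hw hv), left_mem_uIcc]
  · obtain ⟨⟨u, v⟩, he⟩ := e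
    have hadj : (undirGraph E).Adj u v := ⟨hloop _ he, Or.inl he⟩
    simp only [edgeDiff, smul_chiV_apply]
    by_cases hu : u ∈ S <;> by_cases hv : v ∈ S <;> simp only [hu, hv, if_true, if_false]
    · simp
    · have hv' : ε * d v ≤ 0 := not_lt.1 fun h => hv (mem_signComponent_of_adj hu hadj h)
      have := pos_of_mem_signComponent hw hu
      rw [sub_zero]
      exact unit_mem_uIcc_zero hε (by linarith [mul_sub ε (d u) (d v)])
    · have hu' : ε * d u ≤ 0 := not_lt.1 fun h => hu (mem_signComponent_of_adj hv hadj.symm h)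
      have := pos_of_mem_signComponent hw hv
      rw [zero_sub]
      exact unit_mem_uIcc_zero hε' (by linarith [mul_sub ε (d u) (d v)])
    · simp

end SignComponent

theorem exists_conformalTV_decomposition [Fintype V] (hloop : ∀ e ∈ E, e.1 ≠ e.2) (d : V → ℤ) :
    ∃ (n : ℕ) (S : Fin n → Set V) (ε : Fin n → ℤ),
      (∀ i, InducesConnected E (S i)) ∧ (∀ i, ε i = 1 ∨ ε i = -1) ∧
      (∀ i, ConformalTV E (ε i • chiV (S i)) d) ∧ ∑ i, ε i • chiV (S i) = d := by
  induction h : ∑ v, (d v).natAbs using Nat.strong_induction_on generalizing d with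
  | _ m ih =>
    by_cases hd : d = 0
    · exact ⟨0, finZeroElim, finZeroElim, finZeroElim, finZeroElim, finZeroElim, by simp [hd]⟩
    obtain ⟨w, hw⟩ := Function.ne_iff.1 hd
    obtain ⟨ε, hε, hεw⟩ : ∃ ε : ℤ, (ε = 1 ∨ ε = -1) ∧ 0 < ε * d w := by
      rcases (show d w ≠ 0 from hw).lt_or_gt with h | h
      exacts [⟨-1, Or.inr rfl, by omega⟩, ⟨1, Or.inl rfl, by omega⟩]
    set S := signComponent E d ε w
    have hg : ConformalTV E (ε • chiV S) d := conformalTV_signComponent hloop hε hεw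
    obtain ⟨n, S', ε', hS', hε', hg', hsum'⟩ :=
      ih _ (h ▸ hg.1.sum_natAbs_sub_lt
        (smul_chiV_ne_zero (by omega) inducesConnected_signComponent.1)) (d - ε • chiV S) rfl
    refine ⟨n + 1, Fin.cons S S', Fin.cons ε ε',
      Fin.forall_fin_succ.2 ⟨inducesConnected_signComponent, hS'⟩, Fin.forall_fin_succ.2 ⟨hε, hε'⟩,
      Fin.forall_fin_succ.2 ⟨hg, fun i => (hg' i).trans hg.sub_conformalTV_self⟩, ?_⟩
    rw [Fin.sum_univ_succ]
    simp only [Fin.cons_zero, Fin.cons_succ, hsum']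
    abel

theorem exists_connected_descent_move [Fintype V] {F : V → ℝ → ℝ} {Gf : V × V → ℝ → ℝ}
    (hloop : ∀ e ∈ E, e.1 ≠ e.2) (hF : ∀ v, ConvexOn ℝ univ (F v))
    (hG : ∀ e ∈ E, ConvexOn ℝ univ (Gf e)) {x y : V → ℤ} (hxy : x ≠ y)
    (hJ : JObj E F Gf y ≤ JObj E F Gf x) :
    ∃ (S : Set V) (ε : ℤ), InducesConnected E S ∧ (ε = 1 ∨ ε = -1) ∧
      Sqle (ε • chiV S) (y - x) ∧ JObj E F Gf (x + ε • chiV S) ≤ JObj E F Gf x := by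
  obtain ⟨n, S, ε, hS, hε, hg, hsum⟩ := exists_conformalTV_decomposition hloop (y - x)
  have hn : (Finset.univ : Finset (Fin n)).Nonempty := by
    refine Finset.univ_nonempty_iff.2 ⟨⟨0, Nat.pos_of_ne_zero fun hn => hxy ?_⟩⟩
    subst hn
    simpa [eq_comm, sub_eq_zero] using hsum
  have hsuper := JObj_sum_add_sub_le hF hG x (y - x) (s := Finset.univ) fun i _ => hg i
  rw [hsum, add_sub_cancel] at hsuper
  obtain ⟨i, -, hi⟩ := Finset.exists_le_of_sum_le hn
    (hsuper.trans ((sub_nonpos.2 hJ).trans Finset.sum_const_zero.ge))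
  exact ⟨S i, ε i, hS i, hε i, (hg i).1, sub_nonpos.1 hi⟩

def AugmentationPath (E : Finset (V × V)) (J : (V → ℤ) → ℝ) (P : (V → ℤ) → Prop)
    (x y : V → ℤ) : Prop :=
  ∃ (N : ℕ) (S : Fin N → Set V) (ε α : Fin N → ℤ) (xs : Fin (N + 1) → V → ℤ),
    xs 0 = x ∧ xs (Fin.last N) = y ∧
    (∀ j, InducesConnected E (S j)) ∧
    (∀ j, ε j = 1 ∨ ε j = -1) ∧
    (∀ j, 0 < α j) ∧
    (∀ j : Fin N, xs j.succ = xs j.castSucc + (α j * ε j) • chiV (S j)) ∧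
    (∀ j : Fin N, J (xs j.succ) ≤ J (xs j.castSucc)) ∧
    (∀ k : Fin (N + 1), P (xs k))

namespace AugmentationPath

variable {J : (V → ℤ) → ℝ} {P : (V → ℤ) → Prop}

theorem refl {y : V → ℤ} (hy : P y) : AugmentationPath E J P y y :=
  ⟨0, finZeroElim, finZeroElim, finZeroElim, fun _ => y, rfl, rfl, finZeroElim, finZeroElim,
    finZeroElim, finZeroElim, finZeroElim, fun _ => hy⟩

theorem cons {x y : V → ℤ} {S : Set V} {ε : ℤ} (hS : InducesConnected E S) (hε : ε = 1 ∨ ε = -1)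
    (hJ : J (x + ε • chiV S) ≤ J x) (hx : P x) (h : AugmentationPath E J P (x + ε • chiV S) y) :
    AugmentationPath E J P x y := by
  obtain ⟨N, S', ε', α', xs, h0, hlast, hS', hε', hα', hstep, hJ', hP⟩ := h
  refine ⟨N + 1, Fin.cons S S', Fin.cons ε ε', Fin.cons 1 α', Fin.cons x xs, rfl, ?_,
    Fin.forall_fin_succ.2 ⟨hS, hS'⟩, Fin.forall_fin_succ.2 ⟨hε, hε'⟩,
    Fin.forall_fin_succ.2 ⟨one_pos, hα'⟩, Fin.forall_fin_succ.2 ⟨?_, fun j => ?_⟩,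
    Fin.forall_fin_succ.2 ⟨?_, fun j => ?_⟩, Fin.forall_fin_succ.2 ⟨hx, hP⟩⟩
  · rwa [← Fin.succ_last, Fin.cons_succ]
  · simp [h0]
  · simpa [← Fin.succ_castSucc] using hstep j
  · simpa [h0] using hJ
  · simpa [← Fin.succ_castSucc] using hJ' j

end AugmentationPath

theorem augmentationPath_of_forall_mem_uIcc [Fintype V] {F : V → ℝ → ℝ} {Gf : V × V → ℝ → ℝ}
    (hloop : ∀ e ∈ E, e.1 ≠ e.2) (hF : ∀ v, ConvexOn ℝ univ (F v))
    (hG : ∀ e ∈ E, ConvexOn ℝ univ (Gf e)) {P : (V → ℤ) → Prop} {y : V → ℤ} (x : V → ℤ)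
    (h : ∀ z : V → ℤ, (∀ v, z v ∈ uIcc (x v) (y v)) → P z ∧ JObj E F Gf y ≤ JObj E F Gf z) :
    AugmentationPath E (JObj E F Gf) P x y := by
  induction hm : ∑ v, ((y - x) v).natAbs using Nat.strong_induction_on generalizing x with
  | _ m ih =>
    have hx := h x fun v => left_mem_uIcc
    by_cases hxy : x = y
    · exact hxy ▸ AugmentationPath.refl hx.1
    obtain ⟨S, ε, hS, hε, hsq, hJ⟩ := exists_connected_descent_move hloop hF hG hxy hx.2
    have hsub : ∀ v, uIcc ((x + ε • chiV S) v) (y v) ⊆ uIcc (x v) (y v) := fun v =>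
      uIcc_subset_uIcc (hsq.add_mem_uIcc v) right_mem_uIcc
    refine .cons hS hε hJ hx.1 (ih _ ?_ _ (fun z hz => h z fun v => hsub v (hz v)) rfl)
    rw [← hm, sub_add_eq_sub_sub]
    exact hsq.sum_natAbs_sub_lt (smul_chiV_ne_zero (by omega) hS.1)

theorem HObj_le_of_forall_mem_uIcc [Fintype V] {Hf : V → ℝ → ℝ}
    (hH : ∀ v, ConvexOn ℝ univ (Hf v)) {x y z : V → ℤ}
    (hxy : ∀ v, Hf v (x v) ≤ Hf v (y v)) (hz : ∀ v, z v ∈ uIcc (x v) (y v)) :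
    HObj Hf z ≤ HObj Hf y := by
  refine Finset.sum_le_sum fun v _ => ?_
  have hzv : (z v : ℝ) ∈ segment ℝ (x v : ℝ) (y v) := by
    have := hz v
    rw [segment_eq_uIcc, mem_uIcc] at *
    exact_mod_cast this
  exact ((hH v).le_on_segment (mem_univ _) (mem_univ _) hzv).trans (max_le (hxy v) le_rfl)

end Augmentation

theorem exists_feasible_graver_augmentation_path_general
    {V : Type*} [Fintype V] (E : Finset (V × V))
    (hloop : ∀ e ∈ E, e.1 ≠ e.2) (Q : ℕ) (Δ : ℝ)
    (F : V → ℝ → ℝ) (Gf : V × V → ℝ → ℝ) (Hf : V → ℝ → ℝ)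
    (hF : ∀ v, ConvexOn ℝ Set.univ (F v))
    (hG : ∀ e ∈ E, ConvexOn ℝ Set.univ (Gf e))
    (hH : ∀ v, ConvexOn ℝ Set.univ (Hf v))
    (x0 : V → ℤ)
    (hx0box : ∀ v, 0 ≤ x0 v ∧ x0 v ≤ (Q : ℤ))
    (hx0min : ∀ (v : V) (q : ℤ), 0 ≤ q → q ≤ (Q : ℤ) →
      Hf v (x0 v : ℝ) ≤ Hf v (q : ℝ))
    (xstar : V → ℤ)
    (hstarfeas : (∀ v, 0 ≤ xstar v ∧ xstar v ≤ (Q : ℤ)) ∧ HObj Hf xstar ≤ Δ)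
    (hstarmin : ∀ y : V → ℤ,
      ((∀ v, 0 ≤ y v ∧ y v ≤ (Q : ℤ)) ∧ HObj Hf y ≤ Δ) →
      JObj E F Gf xstar ≤ JObj E F Gf y) :
    ∃ (N : ℕ) (S : Fin N → Set V) (ε α : Fin N → ℤ) (xs : Fin (N + 1) → V → ℤ),
      xs 0 = x0 ∧ xs (Fin.last N) = xstar ∧
      (∀ j, InducesConnected E (S j)) ∧
      (∀ j, ε j = 1 ∨ ε j = -1) ∧
      (∀ j, 0 < α j) ∧
      (∀ j : Fin N, xs j.succ = xs j.castSucc + (α j * ε j) • chiV (S j)) ∧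
      (∀ j : Fin N, JObj E F Gf (xs j.succ) ≤ JObj E F Gf (xs j.castSucc)) ∧
      (∀ k : Fin (N + 1),
        (∀ v, 0 ≤ xs k v ∧ xs k v ≤ (Q : ℤ)) ∧ HObj Hf (xs k) ≤ Δ) := by
  have feasible_of_mem_uIcc (z : V → ℤ) (hz : ∀ v, z v ∈ uIcc (x0 v) (xstar v)) :
      (∀ v, 0 ≤ z v ∧ z v ≤ (Q : ℤ)) ∧ HObj Hf z ≤ Δ := by
    refine ⟨fun v => ?_, ?_⟩
    · have := hz v
      have := hx0box v
      have := hstarfeas.1 v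
      rw [mem_uIcc] at *
      omega
    · refine (HObj_le_of_forall_mem_uIcc hH (fun v => ?_) hz).trans hstarfeas.2
      exact hx0min v _ (hstarfeas.1 v).1 (hstarfeas.1 v).2
  exact augmentationPath_of_forall_mem_uIcc
    (P := fun z => (∀ v, 0 ≤ z v ∧ z v ≤ (Q : ℤ)) ∧ HObj Hf z ≤ Δ) hloop hF hG x0
    fun z hz => ⟨feasible_of_mem_uIcc z hz, hstarmin z (feasible_of_mem_uIcc z hz)⟩

/-- Starting from a coordinatewise budget-minimal point, there
is a sequence of positive multiples of connected-subgraph (Graver) moves whose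
iterates stay feasible, have non-increasing objective, and end at the global
optimum `x*`. -/
theorem exists_feasible_graver_augmentation_path
    {V : Type*} [Fintype V] [DecidableEq V] (E : Finset (V × V))
    (hloop : ∀ e ∈ E, e.1 ≠ e.2) (Q : ℕ) (Δ : ℝ)
    (F : V → ℝ → ℝ) (Gf : V × V → ℝ → ℝ) (Hf : V → ℝ → ℝ)
    (hF : ∀ v, ConvexOn ℝ Set.univ (F v))
    (hG : ∀ e ∈ E, ConvexOn ℝ Set.univ (Gf e))
    (hH : ∀ v, ConvexOn ℝ Set.univ (Hf v))
    (x0 : V → ℤ)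
    (hx0box : ∀ v, 0 ≤ x0 v ∧ x0 v ≤ (Q : ℤ))
    (hx0min : ∀ (v : V) (q : ℤ), 0 ≤ q → q ≤ (Q : ℤ) →
      Hf v (x0 v : ℝ) ≤ Hf v (q : ℝ))
    (xstar : V → ℤ)
    (hstarfeas : (∀ v, 0 ≤ xstar v ∧ xstar v ≤ (Q : ℤ)) ∧ HObj Hf xstar ≤ Δ)
    (hstarmin : ∀ y : V → ℤ,
      ((∀ v, 0 ≤ y v ∧ y v ≤ (Q : ℤ)) ∧ HObj Hf y ≤ Δ) →
      JObj E F Gf xstar ≤ JObj E F Gf y) :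
    ∃ (N : ℕ) (S : Fin N → Set V) (ε α : Fin N → ℤ) (xs : Fin (N + 1) → V → ℤ),
      xs 0 = x0 ∧ xs (Fin.last N) = xstar ∧
      (∀ j, InducesConnected E (S j)) ∧
      (∀ j, ε j = 1 ∨ ε j = -1) ∧
      (∀ j, 0 < α j) ∧
      (∀ j : Fin N, xs j.succ = xs j.castSucc + (α j * ε j) • chiV (S j)) ∧
      (∀ j : Fin N, JObj E F Gf (xs j.succ) ≤ JObj E F Gf (xs j.castSucc)) ∧
      (∀ k : Fin (N + 1),
        (∀ v, 0 ≤ xs k v ∧ xs k v ≤ (Q : ℤ)) ∧ HObj Hf (xs k) ≤ Δ) :=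
  exists_feasible_graver_augmentation_path_general E hloop Q Δ F Gf Hf hF hG hH x0 hx0box hx0min
    xstar hstarfeas hstarmin
end

section
/- Let X be a set (the box {x ∈ ℤ^V : 0 ≤ x_v ≤ Q}), let J, H : X → ℝ, let Δ ≥ 0, μ > 0, and 0 ≤ p ≤ 1. Suppose x⁰ ∈ X minimizes H over X with H(x⁰) = 0; suppose x̄ ∈ X minimizes the penalized objective x ↦ J(x) + μ(H(x) − Δ) over X; suppose x* ∈ X satisfies H(x*) ≤ Δ and minimizes J over {x ∈ X : H(x) ≤ Δ}; and suppose pΔ ≤ H(x̄) ≤ Δ. Then J(x̄) − J(x⁰) ≤ p·(J(x*) − J(x⁰)). -/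
/-- Conditional `p`-approximation property of the penalty
reformulation: if the minimizer `x̄` of the penalized objective uses at least a
fraction `p` of the budget `Δ`, then `J(x̄) − J(x⁰) ≤ p (J(x*) − J(x⁰))`. -/
theorem penalty_p_approximation {X : Type*} (J H : X → ℝ) (Δ μ p : ℝ)
    (hΔ : 0 ≤ Δ) (hμ : 0 < μ) (hp0 : 0 ≤ p) (hp1 : p ≤ 1)
    (x0 xbar xstar : X)
    (hx0min : ∀ x, H x0 ≤ H x) (hx0zero : H x0 = 0)
    (hxbarmin : ∀ x, J xbar + μ * (H xbar - Δ) ≤ J x + μ * (H x - Δ))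
    (hxstarfeas : H xstar ≤ Δ)
    (hxstarmin : ∀ x, H x ≤ Δ → J xstar ≤ J x)
    (hlow : p * Δ ≤ H xbar) (hhigh : H xbar ≤ Δ) :
    J xbar - J x0 ≤ p * (J xstar - J x0) := by
  have h1 := hxbarmin x0
  have h2 := hxbarmin xstar
  have h1' : J xbar - J x0 ≤ -(μ * H xbar) := by
    rw [hx0zero] at h1; linarith
  have h2' : J xbar - J xstar ≤ μ * (Δ - H xbar) := by
    nlinarith [mul_le_mul_of_nonneg_left hxstarfeas hμ.le]
  nlinarith [mul_le_mul_of_nonneg_left h1' (sub_nonneg.2 hp1),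
    mul_le_mul_of_nonneg_left h2' hp0,
    mul_le_mul_of_nonneg_left hlow hμ.le]
end

section
/- Let G = (V, E) be a finite directed graph with no self-loops and let A'_TV be the associated E × (V ⊔ E ⊔ E) matrix. Let Bas ⊆ V ⊔ E ⊔ E be a set of exactly |E| column indices such that the square E × Bas submatrix of A'_TV is invertible over ℚ; call all other indices nonbasic. Let E_NB = {f ∈ E : both the a⁺-copy and the a⁻-copy of f are nonbasic}. Then the undirected graph with vertex set V whose edges are the (undirected versions of the) edges in E_NB is acyclic, i.e., it is a spanning forest of G. -/
/-! A cycle of `GNB E Bas` carries a signed edge indicator `y : E → ℚ`, with sign `±1` according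
to whether the cycle traverses an edge along or against its orientation. Pairing `y` with the
column of a vertex gives zero because the cycle is closed, and pairing it with the `a⁺`- or
`a⁻`-column of an edge gives `∓ y f`, which is zero whenever that column is basic since `y` lives
on edges with both copies nonbasic. So `y` is orthogonal to the `|E|` independent basic columns,
which span `ℚ^E`; hence `y ⬝ᵥ y = 0`, whereas `y = ±1` on the first edge of the cycle. -/

/-- The matrix `A'_TV = [B −I I]` over `ℚ`, with rows indexed by edges and
columns indexed by `V ⊔ E ⊔ E`. -/
def ATVQ' {V : Type*} [DecidableEq V] (E : Finset (V × V)) :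
    Matrix {e : V × V // e ∈ E}
      (V ⊕ ({e : V × V // e ∈ E} ⊕ {e : V × V // e ∈ E})) ℚ :=
  fun e c =>
    match c with
    | Sum.inl v =>
        (if (e : V × V).1 = v then 1 else 0) - (if (e : V × V).2 = v then 1 else 0)
    | Sum.inr (Sum.inl f) => if e = f then -1 else 0
    | Sum.inr (Sum.inr f) => if e = f then 1 else 0

/-- `Bas` is a basis of columns of `A'_TV`: it has `|E|` columns and the
corresponding square `E × Bas` submatrix is invertible over `ℚ` (equivalently,
the selected columns are linearly independent). -/
def IsBasisCols {V : Type*} [DecidableEq V] (E : Finset (V × V))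
    (Bas : Finset (V ⊕ ({e : V × V // e ∈ E} ⊕ {e : V × V // e ∈ E}))) : Prop :=
  Bas.card = E.card ∧
    LinearIndependent ℚ
      (fun b : {c // c ∈ Bas} => fun e : {e : V × V // e ∈ E} => ATVQ' E e (b : _))

/-- The undirected graph `𝒢_NB` on `V` whose edges are the edges of `E` for
which both the `a⁺`- and the `a⁻`-copy are nonbasic. -/
def GNB {V : Type*} [DecidableEq V] (E : Finset (V × V))
    (Bas : Finset (V ⊕ ({e : V × V // e ∈ E} ⊕ {e : V × V // e ∈ E}))) :
    SimpleGraph V where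
  Adj u v := u ≠ v ∧ ∃ f : {e : V × V // e ∈ E},
    ((f : V × V) = (u, v) ∨ (f : V × V) = (v, u)) ∧
    Sum.inr (Sum.inl f) ∉ Bas ∧ Sum.inr (Sum.inr f) ∉ Bas
  symm := by
    constructor
    rintro u v ⟨huv, f, hf, h1, h2⟩
    exact ⟨huv.symm, f, hf.elim Or.inr Or.inl, h1, h2⟩
  loopless := by constructor; rintro u ⟨h, -⟩; exact h rfl

open Matrix

theorem eq_zero_of_forall_dotProduct_eq_zero {K ι κ : Type*} [Field K] [LinearOrder K]
    [IsStrictOrderedRing K] [Fintype ι] [Fintype κ] {v : ι → κ → K}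
    (hv : LinearIndependent K v) (hcard : Fintype.card ι = Fintype.card κ) {y : κ → K}
    (hy : ∀ i, y ⬝ᵥ v i = 0) : y = 0 := by
  have hspan : Submodule.span K (Set.range v) = ⊤ :=
    hv.span_eq_top_of_card_eq_finrank' (by rw [hcard, Module.finrank_fintype_fun_eq_card])
  have hperp : dotProductBilin K K y = 0 := LinearMap.ext_on_range hspan hy
  exact dotProduct_self_eq_zero.mp (LinearMap.congr_fun hperp y)

namespace GNB

variable {V : Type*} [DecidableEq V] {E : Finset (V × V)}
  {Bas : Finset (V ⊕ ({e : V × V // e ∈ E} ⊕ {e : V × V // e ∈ E}))}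

noncomputable def edgeOf {u v : V} (h : (GNB E Bas).Adj u v) : {e : V × V // e ∈ E} :=
  h.2.choose

theorem edgeOf_eq {u v : V} (h : (GNB E Bas).Adj u v) :
    (edgeOf h : V × V) = (u, v) ∨ (edgeOf h : V × V) = (v, u) :=
  h.2.choose_spec.1

theorem edgeOf_nonbasic {u v : V} (h : (GNB E Bas).Adj u v) :
    Sum.inr (Sum.inl (edgeOf h)) ∉ Bas ∧ Sum.inr (Sum.inr (edgeOf h)) ∉ Bas :=
  h.2.choose_spec.2

theorem mk_edgeOf {u v : V} (h : (GNB E Bas).Adj u v) :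
    s((edgeOf h : V × V).1, (edgeOf h : V × V).2) = s(u, v) := by
  rcases edgeOf_eq h with h' | h' <;> rw [h']
  exact Sym2.eq_swap

noncomputable def stepFlow {u v : V} (h : (GNB E Bas).Adj u v) :
    {e : V × V // e ∈ E} → ℚ :=
  Pi.single (edgeOf h) (if (edgeOf h : V × V) = (u, v) then 1 else -1)

noncomputable def walkFlow : ∀ {a b : V}, (GNB E Bas).Walk a b → {e : V × V // e ∈ E} → ℚ
  | _, _, .nil => 0
  | _, _, .cons h p => stepFlow h + walkFlow p

theorem stepFlow_dotProduct_incidence {u w : V} (h : (GNB E Bas).Adj u w) (x : V) :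
    stepFlow h ⬝ᵥ (fun e => ATVQ' E e (Sum.inl x)) =
      (if u = x then 1 else 0) - (if w = x then 1 else 0) := by
  rw [stepFlow, single_dotProduct]
  rcases edgeOf_eq h with h' | h'
  · simp [ATVQ', h']
  · have hne : ((w, u) : V × V) ≠ (u, w) := fun hc => h.1 (congrArg Prod.fst hc).symm
    simp only [ATVQ', h', if_neg hne]
    ring

theorem walkFlow_dotProduct_incidence {a b : V} (p : (GNB E Bas).Walk a b) (x : V) :
    walkFlow p ⬝ᵥ (fun e => ATVQ' E e (Sum.inl x)) =
      (if a = x then 1 else 0) - (if b = x then 1 else 0) := by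
  induction p with
  | nil => simp [walkFlow]
  | cons h q ih =>
    rw [walkFlow, add_dotProduct, stepFlow_dotProduct_incidence, ih]
    ring

theorem walkFlow_apply_eq_zero_of_basic {a b : V} (p : (GNB E Bas).Walk a b)
    {f : {e : V × V // e ∈ E}}
    (hf : Sum.inr (Sum.inl f) ∈ Bas ∨ Sum.inr (Sum.inr f) ∈ Bas) :
    walkFlow p f = 0 := by
  induction p with
  | nil => rfl
  | cons h q ih =>
    have hfh : f ≠ edgeOf h := by
      rintro rfl
      exact hf.elim (edgeOf_nonbasic h).1 (edgeOf_nonbasic h).2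
    simp [walkFlow, stepFlow, hfh, ih]

theorem walkFlow_apply_eq_zero_of_notMem_edges {a b : V} (p : (GNB E Bas).Walk a b)
    {f : {e : V × V // e ∈ E}} (hf : s((f : V × V).1, (f : V × V).2) ∉ p.edges) :
    walkFlow p f = 0 := by
  induction p with
  | nil => rfl
  | cons h q ih =>
    rw [SimpleGraph.Walk.edges_cons, List.mem_cons, not_or] at hf
    have hfh : f ≠ edgeOf h := by
      rintro rfl
      exact hf.1 (mk_edgeOf h)
    simp [walkFlow, stepFlow, hfh, ih hf.2]

theorem walkFlow_ne_zero_of_isTrail {u v b : V} {h : (GNB E Bas).Adj u v}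
    {q : (GNB E Bas).Walk v b} (hp : (SimpleGraph.Walk.cons h q).IsTrail) :
    walkFlow (.cons h q) ≠ 0 := by
  have hfresh : s(u, v) ∉ q.edges := (List.nodup_cons.mp hp.edges_nodup).1
  have htail : walkFlow q (edgeOf h) = 0 :=
    walkFlow_apply_eq_zero_of_notMem_edges q (by rwa [mk_edgeOf])
  intro hzero
  have := congrFun hzero (edgeOf h)
  simp only [walkFlow, Pi.add_apply, htail, stepFlow, Pi.single_eq_same] at this
  split_ifs at this <;> norm_num at this

theorem walkFlow_dotProduct_col_eq_zero_of_mem {v : V} (p : (GNB E Bas).Walk v v)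
    {c : V ⊕ ({e : V × V // e ∈ E} ⊕ {e : V × V // e ∈ E})} (hc : c ∈ Bas) :
    walkFlow p ⬝ᵥ (fun e => ATVQ' E e c) = 0 := by
  rcases c with x | f | f
  · rw [walkFlow_dotProduct_incidence, sub_self]
  · have hcol : (fun e => ATVQ' E e (Sum.inr (Sum.inl f))) = Pi.single f (-1) := by
      ext e; simp [ATVQ', Pi.single_apply]
    rw [hcol, dotProduct_single, walkFlow_apply_eq_zero_of_basic p (.inl hc), zero_mul]
  · have hcol : (fun e => ATVQ' E e (Sum.inr (Sum.inr f))) = Pi.single f 1 := by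
      ext e; simp [ATVQ', Pi.single_apply]
    rw [hcol, dotProduct_single, walkFlow_apply_eq_zero_of_basic p (.inr hc), zero_mul]

end GNB

theorem nonbasic_edges_form_spanning_forest_general
    {V : Type*} [DecidableEq V] (E : Finset (V × V))
    (Bas : Finset (V ⊕ ({e : V × V // e ∈ E} ⊕ {e : V × V // e ∈ E})))
    (hBas : IsBasisCols E Bas) :
    (GNB E Bas).IsAcyclic := by
  rintro v (_ | ⟨h, q⟩) hp
  · exact hp.ne_nil rfl
  · refine GNB.walkFlow_ne_zero_of_isTrail hp.isTrail ?_
    refine eq_zero_of_forall_dotProduct_eq_zero hBas.2 (by simp [hBas.1]) ?_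
    exact fun c => GNB.walkFlow_dotProduct_col_eq_zero_of_mem _ c.2

/-- For any basic solution of `A'_TV`, the undirected graph on
`V` formed by edges whose `a⁺`- and `a⁻`-variables are both nonbasic is acyclic,
i.e. a spanning forest of `G`. -/
theorem nonbasic_edges_form_spanning_forest
    {V : Type*} [Fintype V] [DecidableEq V] (E : Finset (V × V))
    (hloop : ∀ e ∈ E, e.1 ≠ e.2)
    (Bas : Finset (V ⊕ ({e : V × V // e ∈ E} ⊕ {e : V × V // e ∈ E})))
    (hBas : IsBasisCols E Bas) :
    (GNB E Bas).IsAcyclic :=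
  nonbasic_edges_form_spanning_forest_general E Bas hBas
end

section
/- Let G = (V, E) be a finite directed graph with no self-loops and let A'_TV be the associated E × (V ⊔ E ⊔ E) matrix. Let Bas ⊆ V ⊔ E ⊔ E be a set of exactly |E| column indices such that the square E × Bas submatrix of A'_TV is invertible over ℚ; call all other indices nonbasic. Let E_NB = {f ∈ E : both the a⁺-copy and the a⁻-copy of f are nonbasic}, and let 𝒢_NB be the undirected graph on vertex set V whose edges are the edges in E_NB. Then every connected component of 𝒢_NB contains exactly one vertex v such that the column of x_v is nonbasic. -/
/-!
Basic columns are independent and span `ℚ^E`. If every vertex of a component `c` of `𝒢_NB`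
were basic, the vertex columns of `c` would sum to a vector supported on the edges leaving `c`;
such an edge is not in `𝒢_NB`, so one of its copies is basic and cancels it, giving a nontrivial
dependency among basic columns. If two vertices `u ≠ v` of one component were nonbasic, writing
the column of `x_u` in basic columns gives a kernel vector of `A'_TV` vanishing on both copies of
every edge of `𝒢_NB`; the rows of those edges force it to be constant along `𝒢_NB`, yet it is
`-1` at `x_u` and `0` at `x_v`.
-/

namespace Matrix

variable {R K m n : Type*} [Fintype n] {S : Finset n}

theorem mulVec_eq_submatrix_mulVec_of_support_subset [NonUnitalNonAssocSemiring R]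
    (A : Matrix m n R) {μ : n → R} (hμ : ∀ x ∉ S, μ x = 0) :
    A *ᵥ μ = A.submatrix id ((↑) : S → n) *ᵥ fun j => μ j := by
  funext i
  simp only [mulVec, dotProduct, submatrix_apply, id_eq]
  rw [Finset.sum_coe_sort S fun j => A i j * μ j]
  exact (Finset.sum_subset (Finset.subset_univ S) fun x _ hx => by rw [hμ x hx, mul_zero]).symm

theorem eq_zero_of_mulVec_eq_zero_of_support_subset [CommRing R] {A : Matrix m n R}
    (hS : LinearIndependent R fun j : S => A.col j) {μ : n → R} (hμ : ∀ x ∉ S, μ x = 0)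
    (h : A *ᵥ μ = 0) : μ = 0 := by
  rw [A.mulVec_eq_submatrix_mulVec_of_support_subset hμ] at h
  have hres := mulVec_injective_iff.2 hS (h.trans (mulVec_zero _).symm)
  funext x
  by_cases hx : x ∈ S
  · exact congrFun hres ⟨x, hx⟩
  · exact hμ x hx

theorem exists_support_subset_mulVec_eq [Field K] [Fintype m] {A : Matrix m n K}
    (hS : LinearIndependent K fun j : S => A.col j) (hcard : S.card = Fintype.card m)
    (w : m → K) : ∃ μ : n → K, (∀ x ∉ S, μ x = 0) ∧ A *ᵥ μ = w := by
  have hspan : Submodule.span K (Set.range (A.submatrix id ((↑) : S → n)).col) = ⊤ :=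
    hS.span_eq_top_of_card_eq_finrank' (by simp [hcard])
  obtain ⟨c, hc⟩ : w ∈ LinearMap.range (A.submatrix id ((↑) : S → n)).mulVecLin := by
    rw [range_mulVecLin, hspan]; trivial
  classical
  refine ⟨fun x => if hx : x ∈ S then c ⟨x, hx⟩ else 0, fun x hx => dif_neg hx, ?_⟩
  rw [A.mulVec_eq_submatrix_mulVec_of_support_subset fun x hx => dif_neg hx]
  simpa using hc

end Matrix

section

variable {V : Type*} [Fintype V] [DecidableEq V] {E : Finset (V × V)}
  {Bas : Finset (V ⊕ ({e : V × V // e ∈ E} ⊕ {e : V × V // e ∈ E}))}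

open Matrix

theorem ATVQ'_mulVec_apply (μ : V ⊕ ({e : V × V // e ∈ E} ⊕ {e : V × V // e ∈ E}) → ℚ)
    (e : {e : V × V // e ∈ E}) :
    (ATVQ' E *ᵥ μ) e =
      μ (.inl e.1.1) - μ (.inl e.1.2) - μ (.inr (.inl e)) + μ (.inr (.inr e)) := by
  simp only [mulVec, dotProduct, ATVQ', Fintype.sum_sum_type, sub_mul, ite_mul, one_mul, zero_mul,
    neg_mul, Finset.sum_sub_distrib, Finset.sum_ite_eq, Finset.mem_univ, ↓reduceIte,
    Finset.univ_eq_attach, Finset.mem_attach]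
  ring

theorem GNB.apply_inl_eq_of_adj
    {μ : V ⊕ ({e : V × V // e ∈ E} ⊕ {e : V × V // e ∈ E}) → ℚ} (hker : ATVQ' E *ᵥ μ = 0)
    (hedge : ∀ f, .inr (.inl f) ∉ Bas → .inr (.inr f) ∉ Bas →
      μ (.inr (.inl f)) = μ (.inr (.inr f)))
    {u v : V} (huv : (GNB E Bas).Adj u v) : μ (.inl u) = μ (.inl v) := by
  obtain ⟨-, f, hf, h1, h2⟩ := huv
  have hrow := congrFun hker f
  rw [ATVQ'_mulVec_apply, hedge f h1 h2] at hrow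
  rcases hf with hf | hf <;> simp only [hf, Pi.zero_apply] at hrow <;> linarith

theorem GNB.apply_inl_eq_of_reachable
    {μ : V ⊕ ({e : V × V // e ∈ E} ⊕ {e : V × V // e ∈ E}) → ℚ} (hker : ATVQ' E *ᵥ μ = 0)
    (hedge : ∀ f, .inr (.inl f) ∉ Bas → .inr (.inr f) ∉ Bas →
      μ (.inr (.inl f)) = μ (.inr (.inr f)))
    {u v : V} (huv : (GNB E Bas).Reachable u v) : μ (.inl u) = μ (.inl v) := by
  rw [SimpleGraph.reachable_iff_reflTransGen] at huv
  induction huv with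
  | refl => rfl
  | tail _ hadj ih => exact ih.trans (GNB.apply_inl_eq_of_adj hker hedge hadj)

theorem GNB.exists_nonbasic_vertex (hloop : ∀ e ∈ E, e.1 ≠ e.2)
    (hind : LinearIndependent ℚ fun b : Bas => (ATVQ' E).col b)
    (c : (GNB E Bas).ConnectedComponent) :
    ∃ v, (GNB E Bas).connectedComponentMk v = c ∧ .inl v ∉ Bas := by
  classical
  by_contra! hbasic
  let x : V → ℚ := fun u => if (GNB E Bas).connectedComponentMk u = c then 1 else 0
  let χ : {e : V × V // e ∈ E} → ℚ := fun f => x f.1.1 - x f.1.2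
  let μ : V ⊕ ({e : V × V // e ∈ E} ⊕ {e : V × V // e ∈ E}) → ℚ :=
    Sum.elim x (Sum.elim (fun f => if .inr (.inl f) ∈ Bas then χ f else 0)
      (fun f => if .inr (.inl f) ∈ Bas then 0 else -χ f))
  have hker : ATVQ' E *ᵥ μ = 0 := by
    funext f
    rw [ATVQ'_mulVec_apply]
    simp only [μ, χ, Sum.elim_inl, Sum.elim_inr, Pi.zero_apply]
    split_ifs <;> ring
  have hsupp : ∀ y ∉ Bas, μ y = 0 := by
    rintro (u | f | f) hy
    · exact if_neg fun hu => hy (hbasic u hu)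
    · exact if_neg hy
    · by_cases h1 : .inr (.inl f) ∈ Bas
      · exact if_pos h1
      · have hadj : (GNB E Bas).Adj f.1.1 f.1.2 := ⟨hloop f f.2, f, .inl rfl, h1, hy⟩
        have hmk := SimpleGraph.ConnectedComponent.sound hadj.reachable
        simp [μ, χ, x, h1, hmk]
  obtain ⟨v, hv⟩ := c.exists_rep
  have hμv := congrFun (eq_zero_of_mulVec_eq_zero_of_support_subset hind hsupp hker) (.inl v)
  simp only [μ, x, Sum.elim_inl, Pi.zero_apply, ite_eq_right_iff, one_ne_zero] at hμv
  exact hμv hv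

theorem GNB.eq_of_reachable_of_nonbasic (hBas : IsBasisCols E Bas) {u v : V}
    (huv : (GNB E Bas).Reachable u v) (hu : .inl u ∉ Bas) (hv : .inl v ∉ Bas) : u = v := by
  by_contra hne
  have hcard : Bas.card = Fintype.card {e : V × V // e ∈ E} := by
    rw [Fintype.card_coe, hBas.1]
  obtain ⟨μ, hsupp, hμ⟩ := exists_support_subset_mulVec_eq (A := ATVQ' E) hBas.2 hcard
    (ATVQ' E *ᵥ Pi.single (.inl u) 1)
  set ν := μ - Pi.single (Sum.inl u) 1
  have hker : ATVQ' E *ᵥ ν = 0 := by rw [mulVec_sub, hμ, sub_self]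
  have hedge : ∀ f, .inr (.inl f) ∉ Bas → .inr (.inr f) ∉ Bas →
      ν (.inr (.inl f)) = ν (.inr (.inr f)) := by
    intro f h1 h2
    simp [ν, hsupp _ h1, hsupp _ h2]
  simpa [ν, hsupp _ hu, hsupp _ hv, Ne.symm hne] using
    GNB.apply_inl_eq_of_reachable hker hedge huv

end

/-- For any basic solution of `A'_TV`, every connected
component of the nonbasic-edge graph `𝒢_NB` contains exactly one vertex `v`
whose variable `x_v` is nonbasic. -/
theorem each_tree_has_unique_nonbasic_root
    {V : Type*} [Fintype V] [DecidableEq V] (E : Finset (V × V))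
    (hloop : ∀ e ∈ E, e.1 ≠ e.2)
    (Bas : Finset (V ⊕ ({e : V × V // e ∈ E} ⊕ {e : V × V // e ∈ E})))
    (hBas : IsBasisCols E Bas) :
    ∀ c : (GNB E Bas).ConnectedComponent,
      ∃! v : V, (GNB E Bas).connectedComponentMk v = c ∧ Sum.inl v ∉ Bas := by
  intro c
  obtain ⟨v, hvc, hv⟩ := GNB.exists_nonbasic_vertex hloop (Bas := Bas) hBas.2 c
  refine ⟨v, ⟨hvc, hv⟩, fun u ⟨huc, hu⟩ => ?_⟩
  exact GNB.eq_of_reachable_of_nonbasic hBas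
    (SimpleGraph.ConnectedComponent.exact (huc.trans hvc.symm)) hu hv
end

section
/- Let G = (V, E) be a finite directed graph with no self-loops and let (x, a) ∈ ℤ^V × ℤ^E satisfy x_u − x_v = a_{(u,v)} for every (u,v) ∈ E. (i) Suppose x_v > 0 for some v; let k = max{x_v : v ∈ V, x_v > 0}, and let S be the vertex set of a connected component of the subgraph induced by {v ∈ V : x_v = k}. Then (χ_S, χ_{δ⁺(S)} − χ_{δ⁻(S)}) ⊑ (x, a). (ii) Suppose x_v < 0 for some v; let k = min{x_v : v ∈ V, x_v < 0}, and let S be the vertex set of a connected component of the subgraph induced by {v ∈ V : x_v = k}. Then (−χ_S, −χ_{δ⁺(S)} + χ_{δ⁻(S)}) ⊑ (x, a). -/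
/-
The top level set of `x` can only be left by going down: if `u` lies in the component `S` of
`{x = k}` and `v ∉ S` is a neighbour of `u`, then `x v ≠ k` by maximality of `S`, so
`x v < k = x u` because `k` is the largest value of `x`. Hence every edge of `δ⁺(S)` carries
`a = x u - x v > 0` and every edge of `δ⁻(S)` carries `a < 0`, so `(χ_S, χ_{δ⁺(S)} - χ_{δ⁻(S)})`
is the sign pattern of `(x, a)` restricted to `S` and its boundary. Part (ii) is part (i) for
`(-x, -a)`.
-/

open scoped Classical

/-- `S` is the vertex set of a connected component of the subgraph induced by
`W`: `S ⊆ W`, `S` induces a connected subgraph, and `S` is maximal with these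
properties. -/
def IsConnCompOf {V : Type*} (E : Finset (V × V)) (W S : Set V) : Prop :=
  S ⊆ W ∧ InducesConnected E S ∧
    ∀ S' : Set V, S ⊆ S' → S' ⊆ W → InducesConnected E S' → S' = S

theorem SimpleGraph.Connected.induce_insert_of_adj {V : Type*} {G : SimpleGraph V} {S : Set V}
    {u v : V} (hS : (G.induce S).Connected) (hu : u ∈ S) (hadj : G.Adj u v) :
    (G.induce (insert v S)).Connected := by
  have h := SimpleGraph.induce_union_connected hS.preconnected
    (SimpleGraph.induce_pair_connected_of_adj hadj).preconnected ⟨u, hu, by simp⟩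
  rwa [Set.union_insert, Set.insert_eq_of_mem (Set.mem_union_left _ hu), Set.union_singleton]
    at h

theorem sqle_of_forall_eq_zero_or_eq_sign {ι : Type*} {u y : ι → ℤ}
    (h : ∀ i, u i = 0 ∨ u i = Int.sign (y i)) : Sqle u y := by
  intro i
  rcases h i with h | h
  · simp [h]
  · rw [h, Int.sign_mul_self_eq_abs]
    refine ⟨abs_nonneg _, ?_⟩
    rcases eq_or_ne (y i) 0 with hy | hy
    · simp [hy]
    · exact (Int.abs_sign_of_ne_zero hy).trans_le (Int.one_le_abs hy)

theorem sqle_neg_left_iff {ι : Type*} {u y : ι → ℤ} : Sqle (-u) y ↔ Sqle u (-y) := by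
  simp [Sqle]

theorem InKerATV.neg {V : Type*} {E : Finset (V × V)} {x : V → ℤ}
    {a : {e : V × V // e ∈ E} → ℤ} (h : InKerATV E x a) : InKerATV E (-x) (-a) := by
  intro e
  simp only [Pi.neg_apply, ← h e]
  ring

theorem IsConnCompOf.mem_of_edge {V : Type*} {E : Finset (V × V)} {W S : Set V}
    (hS : IsConnCompOf E W S) {u v : V} (hu : u ∈ S) (hv : v ∈ W)
    (he : (u, v) ∈ E ∨ (v, u) ∈ E) : v ∈ S := by
  by_contra hvS
  have hadj : (undirGraph E).Adj u v := ⟨fun h => hvS (h ▸ hu), he⟩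
  have hins := hS.2.2 (insert v S) (Set.subset_insert _ _) (Set.insert_subset hv hS.1)
    ⟨Set.insert_nonempty v S, hS.2.1.2.induce_insert_of_adj hu hadj⟩
  exact hvS (hins ▸ Set.mem_insert v S)

theorem sqle_of_isConnCompOf_top_level {V : Type*} {E : Finset (V × V)} {x : V → ℤ}
    {a : {e : V × V // e ∈ E} → ℤ} {k : ℤ} {S : Set V} (hker : InKerATV E x a) (hk : 0 < k)
    (hmax : ∀ v, x v ≤ k) (hS : IsConnCompOf E {v | x v = k} S) :
    Sqle (chiV S) x ∧ Sqle (chiE (deltaPlus E S) - chiE (deltaMinus E S)) a := by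
  have hxS : ∀ v ∈ S, x v = k := fun v hv => hS.1 hv
  have hlt : ∀ {u v}, u ∈ S → v ∉ S → (u, v) ∈ E ∨ (v, u) ∈ E → x v < k :=
    fun hu hv he => (hmax _).lt_of_ne fun h => hv (hS.mem_of_edge hu h he)
  constructor
  · refine sqle_of_forall_eq_zero_or_eq_sign fun v => ?_
    by_cases hv : v ∈ S
    · right
      simp [chiV, hv, hxS v hv, Int.sign_eq_one_of_pos hk]
    · left
      simp [chiV, hv]
  · refine sqle_of_forall_eq_zero_or_eq_sign fun ⟨⟨u, v⟩, he⟩ => ?_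
    rw [← hker]
    by_cases hu : u ∈ S <;> by_cases hv : v ∈ S
    · left
      simp [chiE, deltaPlus, deltaMinus, hu, hv]
    · right
      have : 0 < x u - x v := by linarith [hxS u hu, hlt hu hv (.inl he)]
      simp [chiE, deltaPlus, deltaMinus, hu, hv, Int.sign_eq_one_of_pos this]
    · right
      have : x u - x v < 0 := by linarith [hxS v hv, hlt hv hu (.inr he)]
      simp [chiE, deltaPlus, deltaMinus, hu, hv, Int.sign_eq_neg_one_of_neg this]
    · left
      simp [chiE, deltaPlus, deltaMinus, hu, hv]

theorem level_set_component_majorized_general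
    {V : Type*} (E : Finset (V × V))
    (x : V → ℤ) (a : {e : V × V // e ∈ E} → ℤ)
    (hker : InKerATV E x a) :
    (∀ (k : ℤ) (S : Set V),
      IsGreatest {n : ℤ | 0 < n ∧ ∃ v, x v = n} k →
      IsConnCompOf E {v | x v = k} S →
      Sqle (chiV S) x ∧
        Sqle (chiE (deltaPlus E S) - chiE (deltaMinus E S)) a) ∧
    (∀ (k : ℤ) (S : Set V),
      IsLeast {n : ℤ | n < 0 ∧ ∃ v, x v = n} k →
      IsConnCompOf E {v | x v = k} S →
      Sqle (-chiV S) x ∧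
        Sqle (-chiE (deltaPlus E S) + chiE (deltaMinus E S)) a) := by
  refine ⟨fun k S hk hS => ?_, fun k S hk hS => ?_⟩
  · have hmax : ∀ v, x v ≤ k := fun v =>
      (lt_or_ge 0 (x v)).elim (fun h => hk.2 ⟨h, v, rfl⟩) (fun h => h.trans hk.1.1.le)
    exact sqle_of_isConnCompOf_top_level hker hk.1.1 hmax hS
  · have hmax : ∀ v, (-x) v ≤ -k := fun v => neg_le_neg <|
      (lt_or_ge (x v) 0).elim (fun h => hk.2 ⟨h, v, rfl⟩) (fun h => hk.1.1.le.trans h)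
    have hS' : IsConnCompOf E {v | (-x) v = -k} S := by simpa using hS
    rw [neg_add_eq_sub, ← neg_sub, sqle_neg_left_iff, sqle_neg_left_iff]
    exact sqle_of_isConnCompOf_top_level hker.neg (neg_pos.2 hk.1.1) hmax hS'

/-- If `(x, a)` lies in the integer kernel of `A_TV`, `k` is
the largest positive value of `x` and `S` is a connected component of the level
set `{v : x_v = k}`, then `(χ_S, χ_{δ⁺(S)} − χ_{δ⁻(S)}) ⊑ (x, a)`; and the
analogous statement for the smallest negative value. -/
theorem level_set_component_majorized
    {V : Type*} [Fintype V] [DecidableEq V] (E : Finset (V × V))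
    (hloop : ∀ e ∈ E, e.1 ≠ e.2)
    (x : V → ℤ) (a : {e : V × V // e ∈ E} → ℤ)
    (hker : InKerATV E x a) :
    (∀ (k : ℤ) (S : Set V),
      IsGreatest {n : ℤ | 0 < n ∧ ∃ v, x v = n} k →
      IsConnCompOf E {v | x v = k} S →
      Sqle (chiV S) x ∧
        Sqle (chiE (deltaPlus E S) - chiE (deltaMinus E S)) a) ∧
    (∀ (k : ℤ) (S : Set V),
      IsLeast {n : ℤ | n < 0 ∧ ∃ v, x v = n} k →
      IsConnCompOf E {v | x v = k} S →
      Sqle (-chiV S) x ∧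
        Sqle (-chiE (deltaPlus E S) + chiE (deltaMinus E S)) a) :=
  level_set_component_majorized_general E x a hker
end
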